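/- arXiv:math/0601174 — 3 statements merged into one kernel-verified Lean document; each statement's English description precedes it below -/
import Mathlib

section
/- Suppose the Markov kernel P satisfies PE(V, c, α, b, C), and let ρ ∈ [1, 1/(1−α)]. Define V_ρ(x) = V(x)^{1−ρ(1−α)} and r_ρ(n) = (n+1)^{ρ−1}. Then there exists a constant M < ∞ such that for all x ∈ 𝒳, 𝔼_x[ Σ_{n=0}^{τ_C − 1} r_ρ(n)·V_ρ(X_n) ] ≤ M·V(x). -/
open MeasureTheory ProbabilityTheory ENNReal Set

/-- The σ-algebra on path space `ℕ → 𝓧` generated by the coordinates `0, …, n`. -/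
def pathFiltration (𝓧 : Type*) [MeasurableSpace 𝓧] (n : ℕ) : MeasurableSpace (ℕ → 𝓧) :=
  MeasurableSpace.comap (fun ω (i : Fin (n + 1)) => ω i) inferInstance

/-- `μ : 𝓧 → Measure (ℕ → 𝓧)` is the family of trajectory laws of the time-homogeneous
Markov chain with transition kernel `P`. -/
def IsMarkovTrajectory {𝓧 : Type*} [MeasurableSpace 𝓧]
    (P : ProbabilityTheory.Kernel 𝓧 𝓧) (μ : 𝓧 → Measure (ℕ → 𝓧)) : Prop :=
  (∀ x, IsProbabilityMeasure (μ x)) ∧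
  (∀ x, μ x {ω | ω 0 = x} = 1) ∧
  (∀ x (n : ℕ) (A : Set (ℕ → 𝓧)), MeasurableSet[pathFiltration 𝓧 n] A →
    ∀ f : 𝓧 → ℝ≥0∞, Measurable f →
      ∫⁻ ω in A, f (ω (n + 1)) ∂(μ x) = ∫⁻ ω in A, (∫⁻ y, f y ∂(P (ω n))) ∂(μ x))

/-- First return time to `C`: `τ_C = inf{n ≥ 1 : X_n ∈ C}` (equal to `∞` if `C` is
never entered at a positive time). -/
noncomputable def returnTime {𝓧 : Type*} (C : Set 𝓧) (ω : ℕ → 𝓧) : ℕ∞ :=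
  ⨅ (n : ℕ) (_ : 1 ≤ n ∧ ω n ∈ C), (n : ℕ∞)

/-!
Two drift sequences are extracted from `PE(V, c, α, b, C)`. After division by `c`, `V` itself is
a Lyapunov function for the reward `V ^ α`. With `γ = 1 - α`, the map
`t ↦ (a + κ t ^ γ) ^ (1 / γ)` is concave, so Jensen's inequality and the decrease of `V ^ γ` by
at least `c γ` off `C` make `W n = (n + κ V ^ γ) ^ (1 / γ)` a time-dependent Lyapunov function
for the reward `(n + 1) ^ (α / γ)`. Along the chain killed at its return to `C`, a drift sequence
telescopes into the bound `𝔼_x Σ_{n < τ_C} g n (X n) ≤ W 0 x + B`. Young's inequality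
`(n + 1) ^ (ρ - 1) V ^ (1 - ρ γ) ≤ (n + 1) ^ (α / γ) + V ^ α` then interpolates between the two
rewards.
-/

theorem ConvexOn.add_mul_sub_le_of_hasDerivAt {S : Set ℝ} {f : ℝ → ℝ} {f' x y : ℝ}
    (hf : ConvexOn ℝ S f) (hx : x ∈ S) (hy : y ∈ S) (hf' : HasDerivAt f f' x) :
    f x + f' * (y - x) ≤ f y := by
  rcases lt_trichotomy x y with hxy | rfl | hxy
  · have := hf.le_slope_of_hasDerivAt hx hy hxy hf'
    rw [slope_def_field, le_div_iff₀ (sub_pos.2 hxy)] at this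
    linarith
  · simp
  · have := hf.slope_le_of_hasDerivAt hy hx hxy hf'
    rw [slope_def_field, div_le_iff₀ (sub_pos.2 hxy)] at this
    linarith

theorem ConcaveOn.le_add_mul_sub_of_hasDerivAt {S : Set ℝ} {f : ℝ → ℝ} {f' x y : ℝ}
    (hf : ConcaveOn ℝ S f) (hx : x ∈ S) (hy : y ∈ S) (hf' : HasDerivAt f f' x) :
    f y ≤ f x + f' * (y - x) := by
  have := hf.neg.add_mul_sub_le_of_hasDerivAt hx hy hf'.neg
  simp only [Pi.neg_apply] at this
  linarith

theorem rpow_sub_mul_rpow_add_mul_le {α c v : ℝ} (hα : α ∈ Icc (0 : ℝ) 1) (hv : 0 < v)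
    (hv' : 0 ≤ v - c * v ^ α) :
    (v - c * v ^ α) ^ (1 - α) + c * (1 - α) ≤ v ^ (1 - α) := by
  have htangent :=
    (Real.concaveOn_rpow (by linarith [hα.2]) (by linarith [hα.1])).le_add_mul_sub_of_hasDerivAt
      hv.le hv' (Real.hasDerivAt_rpow_const (p := 1 - α) (Or.inl hv.ne'))
  have hcancel : v ^ (1 - α - 1) * v ^ α = 1 := by
    rw [← Real.rpow_add hv, show 1 - α - 1 + α = 0 by ring, Real.rpow_zero]
  linear_combination htangent - (1 - α) * c * hcancel

theorem rpow_add_add_rpow_sub_one_le {p a y w : ℝ} (hp : 1 ≤ p) (ha : 0 < a) (hy : 0 ≤ y)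
    (hyw : y + 1 ≤ w) :
    (a + y) ^ p + a ^ (p - 1) ≤ (a + w) ^ p := by
  have hay : 0 < a + y := by linarith
  have htangent := (convexOn_rpow hp).add_mul_sub_le_of_hasDerivAt hay.le
    (show (0 : ℝ) ≤ a + w by linarith) (Real.hasDerivAt_rpow_const (p := p) (Or.inl hay.ne'))
  have hmono : a ^ (p - 1) ≤ (a + y) ^ (p - 1) :=
    Real.rpow_le_rpow ha.le (by linarith) (by linarith)
  have hpos : 0 ≤ (a + y) ^ (p - 1) := Real.rpow_nonneg hay.le _
  nlinarith [mul_le_mul hp (show (1 : ℝ) ≤ w - y by linarith) zero_le_one (by linarith)]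

theorem rpow_mul_rpow_le_rpow_add_rpow {α ρ x y : ℝ} (hα : α ∈ Ioo (0 : ℝ) 1)
    (hρ : ρ ∈ Icc (1 : ℝ) (1 / (1 - α))) (hx : 0 ≤ x) (hy : 0 ≤ y) :
    x ^ (ρ - 1) * y ^ (1 - ρ * (1 - α)) ≤ x ^ ((1 - α)⁻¹ - 1) + y ^ α := by
  obtain ⟨hα0, hα1⟩ := hα
  obtain ⟨hρ1, hρ2⟩ := hρ
  have hγ : 0 < 1 - α := by linarith
  set θ := (ρ - 1) * (1 - α) / α with hθ
  have hθ0 : 0 ≤ θ := by positivity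
  have hθ1 : θ ≤ 1 := by
    rw [div_le_one hα0]
    rw [le_div_iff₀ hγ] at hρ2
    nlinarith
  have hx' : (x ^ ((1 - α)⁻¹ - 1)) ^ θ = x ^ (ρ - 1) := by
    rw [← Real.rpow_mul hx, hθ]; congr 1; field_simp; ring
  have hy' : (y ^ α) ^ (1 - θ) = y ^ (1 - ρ * (1 - α)) := by
    rw [← Real.rpow_mul hy, hθ]; congr 1; field_simp; ring
  have hamgm := Real.geom_mean_le_arith_mean2_weighted hθ0 (sub_nonneg.2 hθ1)
    (Real.rpow_nonneg hx ((1 - α)⁻¹ - 1)) (Real.rpow_nonneg hy α) (add_sub_cancel θ 1)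
  rw [hx', hy'] at hamgm
  nlinarith [Real.rpow_nonneg hx ((1 - α)⁻¹ - 1), Real.rpow_nonneg hy α]

theorem hasDerivAt_add_mul_rpow_rpow_inv {a κ γ t : ℝ} (ha : 0 ≤ a) (hκ : 0 < κ) (hγ : 0 < γ)
    (ht : 0 < t) :
    HasDerivAt (fun t => (a + κ * t ^ γ) ^ γ⁻¹) (κ * (κ + a * t ^ (-γ)) ^ (γ⁻¹ - 1)) t := by
  have hinner : 0 < a + κ * t ^ γ := by positivity
  have hchain := (((Real.hasDerivAt_rpow_const (p := γ) (Or.inl ht.ne')).const_mul κ).const_add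
    a).rpow_const (p := γ⁻¹) (Or.inl hinner.ne')
  convert hchain using 1
  have hsplit : t ^ (γ - 1) = (t ^ (-γ)) ^ (γ⁻¹ - 1) := by
    rw [← Real.rpow_mul ht.le]; congr 1; field_simp; ring
  have hfactor : κ + a * t ^ (-γ) = (a + κ * t ^ γ) * t ^ (-γ) := by
    rw [add_mul, mul_assoc, ← Real.rpow_add ht, add_neg_cancel, Real.rpow_zero]; ring
  rw [hsplit, hfactor, Real.mul_rpow hinner.le (Real.rpow_nonneg ht.le _)]
  field_simp

theorem concaveOn_add_mul_rpow_rpow_inv {a κ γ : ℝ} (ha : 0 ≤ a) (hκ : 0 < κ) (hγ0 : 0 < γ)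
    (hγ1 : γ ≤ 1) :
    ConcaveOn ℝ (Ici 0) (fun t => (a + κ * t ^ γ) ^ γ⁻¹) := by
  refine AntitoneOn.concaveOn_of_deriv (convex_Ici 0) ?_ ?_ ?_
  · refine ContinuousOn.rpow_const (continuousOn_const.add
      (continuousOn_const.mul (continuousOn_id.rpow_const fun _ _ => Or.inr hγ0.le)))
      fun _ _ => Or.inr (inv_nonneg.2 hγ0.le)
  · rw [interior_Ici]
    exact fun t ht =>
      (hasDerivAt_add_mul_rpow_rpow_inv ha hκ hγ0 ht).differentiableAt.differentiableWithinAt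
  · rw [interior_Ici]
    intro s hs t ht hst
    rw [(hasDerivAt_add_mul_rpow_rpow_inv ha hκ hγ0 hs).deriv,
      (hasDerivAt_add_mul_rpow_rpow_inv ha hκ hγ0 ht).deriv]
    have hpow : t ^ (-γ) ≤ s ^ (-γ) :=
      Real.rpow_le_rpow_of_nonpos hs hst (by linarith)
    have hexp : 0 ≤ γ⁻¹ - 1 := sub_nonneg.2 (one_le_inv₀ hγ0 |>.2 hγ1)
    have : 0 ≤ t ^ (-γ) := Real.rpow_nonneg ht.le _
    gcongr

theorem lintegral_ofReal_comp_le_of_concaveOn {Ω : Type*} [MeasurableSpace Ω] {ν : Measure Ω}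
    [IsProbabilityMeasure ν] {φ : ℝ → ℝ} (hφ : ConcaveOn ℝ (Ici 0) φ) (hφ0 : 0 ≤ φ 0)
    {β u : ℝ} (hu : 0 ≤ u) (hφu : HasDerivAt φ β u) (hβ : 0 ≤ β) {f : Ω → ℝ}
    (hf : Measurable f) (hf0 : ∀ ω, 0 ≤ f ω)
    (hfu : ∫⁻ ω, ENNReal.ofReal (f ω) ∂ν ≤ ENNReal.ofReal u) :
    ∫⁻ ω, ENNReal.ofReal (φ (f ω)) ∂ν ≤ ENNReal.ofReal (φ u) := by
  -- the tangent at `u` is an affine majorant of `φ` with nonnegative coefficients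
  have hintercept : 0 ≤ φ u - β * u := by
    have := hφ.le_add_mul_sub_of_hasDerivAt hu self_mem_Ici hφu
    linarith
  have htangent : ∀ ω, φ (f ω) ≤ (φ u - β * u) + β * f ω := fun ω => by
    have := hφ.le_add_mul_sub_of_hasDerivAt hu (hf0 ω) hφu
    linarith
  calc ∫⁻ ω, ENNReal.ofReal (φ (f ω)) ∂ν
      ≤ ∫⁻ ω, ENNReal.ofReal (φ u - β * u) + ENNReal.ofReal β * ENNReal.ofReal (f ω) ∂ν := by
        refine lintegral_mono fun ω => ?_
        rw [← ENNReal.ofReal_mul hβ, ← ENNReal.ofReal_add hintercept (mul_nonneg hβ (hf0 ω))]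
        exact ENNReal.ofReal_le_ofReal (htangent ω)
    _ = ENNReal.ofReal (φ u - β * u) + ENNReal.ofReal β * ∫⁻ ω, ENNReal.ofReal (f ω) ∂ν := by
        rw [lintegral_add_left measurable_const, lintegral_const, measure_univ, mul_one,
          lintegral_const_mul _ hf.ennreal_ofReal]
    _ ≤ ENNReal.ofReal (φ u - β * u) + ENNReal.ofReal β * ENNReal.ofReal u := by gcongr
    _ = ENNReal.ofReal (φ u) := by
        rw [← ENNReal.ofReal_mul hβ, ← ENNReal.ofReal_add hintercept (mul_nonneg hβ hu)]
        ring_nf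

theorem lintegral_ofReal_add_mul_rpow_rpow_inv_le {Ω : Type*} [MeasurableSpace Ω]
    {ν : Measure Ω} [IsProbabilityMeasure ν] {f : Ω → ℝ} (hf : Measurable f) (hf0 : ∀ ω, 0 ≤ f ω)
    {a κ γ u : ℝ} (ha : 0 ≤ a) (hκ : 0 < κ) (hγ0 : 0 < γ) (hγ1 : γ ≤ 1) (hu : 0 < u)
    (hfu : ∫⁻ ω, ENNReal.ofReal (f ω) ∂ν ≤ ENNReal.ofReal u) :
    ∫⁻ ω, ENNReal.ofReal ((a + κ * f ω ^ γ) ^ γ⁻¹) ∂ν ≤ ENNReal.ofReal ((a + κ * u ^ γ) ^ γ⁻¹) :=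
  lintegral_ofReal_comp_le_of_concaveOn (concaveOn_add_mul_rpow_rpow_inv ha hκ hγ0 hγ1)
    (by positivity) hu.le (hasDerivAt_add_mul_rpow_rpow_inv ha hκ hγ0 hu) (by positivity) hf hf0 hfu

theorem add_one_add_mul_rpow_rpow_inv_add_le {n α c κ v : ℝ} (hn : 0 ≤ n)
    (hα : α ∈ Ioo (0 : ℝ) 1) (hκ : 0 ≤ κ) (hκc : 2 ≤ κ * (c * (1 - α))) (hv : 0 < v)
    (hv' : 0 ≤ v - c * v ^ α) :
    (n + 1 + κ * (v - c * v ^ α) ^ (1 - α)) ^ (1 - α)⁻¹ + (n + 1) ^ ((1 - α)⁻¹ - 1)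
      ≤ (n + κ * v ^ (1 - α)) ^ (1 - α)⁻¹ := by
  have hdecrease := rpow_sub_mul_rpow_add_mul_le (Ioo_subset_Icc_self hα) hv hv'
  -- one unit of the decrease pays for the shift `n + 1 ↦ n`, the other for the reward
  have hgap : κ * (v - c * v ^ α) ^ (1 - α) + 1 + 1 ≤ κ * v ^ (1 - α) := by
    nlinarith [mul_le_mul_of_nonneg_left hdecrease hκ]
  have hp : 1 ≤ (1 - α)⁻¹ := (one_le_inv₀ (by linarith [hα.2])).2 (by linarith [hα.1])
  have := rpow_add_add_rpow_sub_one_le (a := n + 1) hp (by linarith) (by positivity)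
    (le_sub_right_of_add_le hgap)
  convert this using 2
  ring

section Chain

variable {𝓧 : Type*}

def noReturnUpTo (C : Set 𝓧) (n : ℕ) : Set (ℕ → 𝓧) := {ω | ∀ i, 1 ≤ i → i ≤ n → ω i ∉ C}

theorem noReturnUpTo_zero (C : Set 𝓧) : noReturnUpTo C 0 = univ :=
  Set.eq_univ_of_forall fun _ i hi hi' => absurd (hi.trans hi') (by omega)

theorem noReturnUpTo_succ_subset (C : Set 𝓧) (n : ℕ) :
    noReturnUpTo C (n + 1) ⊆ noReturnUpTo C n :=
  fun _ hω i hi hin => hω i hi (hin.trans n.le_succ)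

theorem lt_returnTime_iff {C : Set 𝓧} {ω : ℕ → 𝓧} {n : ℕ} :
    (n : ℕ∞) < returnTime C ω ↔ ω ∈ noReturnUpTo C n := by
  constructor
  · intro h i hi hin hiC
    have : returnTime C ω ≤ i := iInf₂_le i ⟨hi, hiC⟩
    exact absurd (Nat.cast_lt.1 (h.trans_le this)) (by omega)
  · intro h
    refine (Nat.cast_lt.2 n.lt_succ_self).trans_le (le_iInf₂ fun i hi => Nat.cast_le.2 ?_)
    by_contra! hlt
    exact h i hi.1 (by omega) hi.2

variable [MeasurableSpace 𝓧]

theorem measurableSet_pathFiltration_noReturnUpTo {C : Set 𝓧} (hC : MeasurableSet C) (n : ℕ) :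
    MeasurableSet[pathFiltration 𝓧 n] (noReturnUpTo C n) := by
  refine ⟨{v | ∀ i : Fin (n + 1), 1 ≤ (i : ℕ) → v i ∉ C}, ?_, ?_⟩
  · simp only [ofPred_forall]
    exact MeasurableSet.iInter fun i => MeasurableSet.iInter fun _ =>
      hC.compl.preimage (measurable_pi_apply i)
  · ext ω
    exact ⟨fun h i hi hin => h ⟨i, Nat.lt_succ_of_le hin⟩ hi,
      fun h i hi => h i hi (Nat.lt_succ_iff.1 i.isLt)⟩

theorem pathFiltration_le (n : ℕ) : pathFiltration 𝓧 n ≤ MeasurableSpace.pi :=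
  Measurable.comap_le <| measurable_pi_lambda (fun (ω : ℕ → 𝓧) (i : Fin (n + 1)) => ω i) fun i =>
    measurable_pi_apply (i : ℕ)

theorem measurableSet_noReturnUpTo {C : Set 𝓧} (hC : MeasurableSet C) (n : ℕ) :
    MeasurableSet (noReturnUpTo C n) :=
  pathFiltration_le n _ (measurableSet_pathFiltration_noReturnUpTo hC n)

namespace IsMarkovTrajectory

variable {P : Kernel 𝓧 𝓧} {μ : 𝓧 → Measure (ℕ → 𝓧)}

theorem lintegral_comp_zero (hμ : IsMarkovTrajectory P μ) (x : 𝓧) {φ : 𝓧 → ℝ≥0∞}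
    (hφ : Measurable φ) : ∫⁻ ω, φ (ω 0) ∂μ x = φ x := by
  have := hμ.1 x
  have hae : ∀ᵐ ω ∂μ x, φ (ω 0) = φ x := by
    have hφ0 : Measurable fun ω : ℕ → 𝓧 => φ (ω 0) := hφ.comp (measurable_pi_apply 0)
    rw [ae_iff_measure_eq (measurableSet_eq_fun hφ0 measurable_const).nullMeasurableSet,
      measure_univ]
    refine le_antisymm prob_le_one ((hμ.2.1 x).symm.le.trans (measure_mono fun ω hω => ?_))
    exact congrArg φ hω
  rw [lintegral_congr_ae hae, lintegral_const, measure_univ, mul_one]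

theorem setLIntegral_succ_add_le (hμ : IsMarkovTrajectory P μ) (x : 𝓧) {C : Set 𝓧}
    (hC : MeasurableSet C) (n : ℕ) {f h : 𝓧 → ℝ≥0∞} (hf : Measurable f) :
    ∫⁻ ω in noReturnUpTo C (n + 1), f (ω (n + 1)) ∂μ x + ∫⁻ ω in noReturnUpTo C n, h (ω n) ∂μ x
      ≤ ∫⁻ ω in noReturnUpTo C n, (∫⁻ y, f y ∂P (ω n) + h (ω n)) ∂μ x := by
  have hPf : Measurable fun ω : ℕ → 𝓧 => ∫⁻ y, f y ∂P (ω n) :=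
    hf.lintegral_kernel.comp (measurable_pi_apply n)
  rw [lintegral_add_left hPf,
    ← hμ.2.2 x n _ (measurableSet_pathFiltration_noReturnUpTo hC n) f hf]
  gcongr ?_ + _
  exact lintegral_mono_set (noReturnUpTo_succ_subset C n)

end IsMarkovTrajectory

structure IsDriftSequence (P : Kernel 𝓧 𝓧) (C : Set 𝓧) (W g : ℕ → 𝓧 → ℝ≥0∞) (B : ℝ≥0∞) :
    Prop where
  measurable_W : ∀ n, Measurable (W n)
  measurable_g : ∀ n, Measurable (g n)
  drift_off : ∀ n, ∀ z ∉ C, ∫⁻ y, W (n + 1) y ∂P z + g n z ≤ W n z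
  drift_on : ∀ z ∈ C, ∫⁻ y, W 1 y ∂P z + g 0 z ≤ W 0 z + B

namespace IsDriftSequence

variable {P : Kernel 𝓧 𝓧} {C : Set 𝓧} {W g : ℕ → 𝓧 → ℝ≥0∞} {B : ℝ≥0∞}

theorem drift_zero (hW : IsDriftSequence P C W g B) (z : 𝓧) :
    ∫⁻ y, W 1 y ∂P z + g 0 z ≤ W 0 z + B := by
  by_cases hz : z ∈ C
  · exact hW.drift_on z hz
  · exact (hW.drift_off 0 z hz).trans le_self_add

theorem add {W' g' : ℕ → 𝓧 → ℝ≥0∞} {B' : ℝ≥0∞} (hW : IsDriftSequence P C W g B)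
    (hW' : IsDriftSequence P C W' g' B') : IsDriftSequence P C (W + W') (g + g') (B + B') where
  measurable_W n := (hW.measurable_W n).add (hW'.measurable_W n)
  measurable_g n := (hW.measurable_g n).add (hW'.measurable_g n)
  drift_off n z hz := by
    simp only [Pi.add_apply]
    rw [lintegral_add_left (hW.measurable_W _)]
    calc _ = (∫⁻ y, W (n + 1) y ∂P z + g n z) + (∫⁻ y, W' (n + 1) y ∂P z + g' n z) := by ring
      _ ≤ W n z + W' n z := add_le_add (hW.drift_off n z hz) (hW'.drift_off n z hz)
  drift_on z hz := by
    simp only [Pi.add_apply]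
    rw [lintegral_add_left (hW.measurable_W _)]
    calc _ = (∫⁻ y, W 1 y ∂P z + g 0 z) + (∫⁻ y, W' 1 y ∂P z + g' 0 z) := by ring
      _ ≤ (W 0 z + B) + (W' 0 z + B') := add_le_add (hW.drift_on z hz) (hW'.drift_on z hz)
      _ = W 0 z + W' 0 z + (B + B') := by ring

theorem lintegral_tsum_le (hW : IsDriftSequence P C W g B) {μ : 𝓧 → Measure (ℕ → 𝓧)}
    (hμ : IsMarkovTrajectory P μ) (hC : MeasurableSet C) (x : 𝓧) :
    ∫⁻ ω, ∑' n, {k : ℕ | (k : ℕ∞) < returnTime C ω}.indicator (fun k => g k (ω k)) n ∂μ x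
      ≤ W 0 x + B := by
  have hpartial : ∀ N, ∫⁻ ω in noReturnUpTo C (N + 1), W (N + 1) (ω (N + 1)) ∂μ x
      + ∑ n ∈ Finset.range (N + 1), ∫⁻ ω in noReturnUpTo C n, g n (ω n) ∂μ x ≤ W 0 x + B := by
    intro N
    induction N with
    | zero =>
      calc _ ≤ ∫⁻ ω in noReturnUpTo C 0, (∫⁻ y, W 1 y ∂P (ω 0) + g 0 (ω 0)) ∂μ x := by
            simpa using hμ.setLIntegral_succ_add_le x hC 0 (hW.measurable_W 1)
        _ = ∫⁻ y, W 1 y ∂P x + g 0 x := by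
            rw [noReturnUpTo_zero, Measure.restrict_univ]
            exact hμ.lintegral_comp_zero x (φ := fun z => ∫⁻ y, W 1 y ∂P z + g 0 z)
              ((hW.measurable_W 1).lintegral_kernel.add (hW.measurable_g 0))
        _ ≤ W 0 x + B := hW.drift_zero x
    | succ N ih =>
      have hstep : ∫⁻ ω in noReturnUpTo C (N + 2), W (N + 2) (ω (N + 2)) ∂μ x
          + ∫⁻ ω in noReturnUpTo C (N + 1), g (N + 1) (ω (N + 1)) ∂μ x
          ≤ ∫⁻ ω in noReturnUpTo C (N + 1), W (N + 1) (ω (N + 1)) ∂μ x :=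
        (hμ.setLIntegral_succ_add_le x hC (N + 1) (hW.measurable_W _)).trans <|
          setLIntegral_mono ((hW.measurable_W _).comp (measurable_pi_apply _)) fun ω hω =>
            hW.drift_off _ _ (hω (N + 1) (by omega) le_rfl)
      rw [Finset.sum_range_succ, ← add_assoc, add_right_comm]
      exact (add_le_add hstep le_rfl).trans ih
  have hmeas : ∀ n, Measurable fun ω : ℕ → 𝓧 =>
      (noReturnUpTo C n).indicator (fun ω => g n (ω n)) ω := fun n =>
    ((hW.measurable_g n).comp (measurable_pi_apply n)).indicator (measurableSet_noReturnUpTo hC n)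
  have hind : ∀ ω n, {k : ℕ | (k : ℕ∞) < returnTime C ω}.indicator (fun k => g k (ω k)) n
      = (noReturnUpTo C n).indicator (fun ω => g n (ω n)) ω := fun ω n => by
    by_cases h : ω ∈ noReturnUpTo C n
    · rw [indicator_of_mem h, indicator_of_mem (s := {k : ℕ | (k : ℕ∞) < returnTime C ω})
        (lt_returnTime_iff.2 h)]
    · rw [indicator_of_notMem h, indicator_of_notMem (s := {k : ℕ | (k : ℕ∞) < returnTime C ω})
        (mt lt_returnTime_iff.1 h)]
  calc _ = ∫⁻ ω, ∑' n, (noReturnUpTo C n).indicator (fun ω => g n (ω n)) ω ∂μ x := by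
        simp only [hind]
    _ = ∑' n, ∫⁻ ω in noReturnUpTo C n, g n (ω n) ∂μ x := by
        rw [lintegral_tsum fun n => (hmeas n).aemeasurable]
        exact tsum_congr fun n => lintegral_indicator (measurableSet_noReturnUpTo hC n) _
    _ ≤ W 0 x + B := by
      refine ENNReal.tsum_le_of_sum_range_le fun N => ?_
      cases N with
      | zero => simp
      | succ N => exact le_add_self.trans (hpartial N)

end IsDriftSequence

def PolynomialDrift (P : Kernel 𝓧 𝓧) (V : 𝓧 → ℝ) (c α b : ℝ) (C : Set 𝓧) : Prop :=
  ∀ x, ∫⁻ y, ENNReal.ofReal (V y) ∂P x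
    ≤ ENNReal.ofReal (V x - c * V x ^ α + C.indicator (fun _ => b) x)

namespace PolynomialDrift

variable {P : Kernel 𝓧 𝓧} [IsMarkovKernel P] {V : 𝓧 → ℝ} {c α b : ℝ} {C : Set 𝓧}

theorem one_le (hPE : PolynomialDrift P V c α b C) (hV1 : ∀ x, 1 ≤ V x) (z : 𝓧) :
    1 ≤ V z - c * V z ^ α + C.indicator (fun _ => b) z := by
  refine ENNReal.one_le_ofReal.1 (le_trans ?_ (hPE z))
  calc (1 : ℝ≥0∞) = ∫⁻ _, 1 ∂P z := by rw [lintegral_one, measure_univ]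
    _ ≤ ∫⁻ y, ENNReal.ofReal (V y) ∂P z :=
      lintegral_mono fun y => ENNReal.one_le_ofReal.2 (hV1 y)

theorem isDriftSequence_rpow (hPE : PolynomialDrift P V c α b C) (hV : Measurable V)
    (hV1 : ∀ x, 1 ≤ V x) (hc : 0 < c) :
    IsDriftSequence P C (fun _ z => ENNReal.ofReal (c⁻¹ * V z))
      (fun _ z => ENNReal.ofReal (V z ^ α)) (ENNReal.ofReal (c⁻¹ * b)) := by
  have hstep : ∀ z, ∫⁻ y, ENNReal.ofReal (c⁻¹ * V y) ∂P z + ENNReal.ofReal (V z ^ α)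
      ≤ ENNReal.ofReal (c⁻¹ * V z + c⁻¹ * C.indicator (fun _ => b) z) := fun z => by
    have hbound := hPE.one_le hV1 z
    simp only [ENNReal.ofReal_mul (inv_nonneg.2 hc.le)]
    rw [lintegral_const_mul _ hV.ennreal_ofReal]
    calc _ ≤ ENNReal.ofReal c⁻¹
          * ENNReal.ofReal (V z - c * V z ^ α + C.indicator (fun _ => b) z)
          + ENNReal.ofReal (V z ^ α) := by
          gcongr
          exact hPE z
      _ = _ := by
          rw [← ENNReal.ofReal_mul (inv_nonneg.2 hc.le),
            ← ENNReal.ofReal_add (mul_nonneg (inv_nonneg.2 hc.le) (by linarith))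
              (Real.rpow_nonneg (by linarith [hV1 z]) _)]
          congr 1
          field_simp
          ring
  refine ⟨fun _ => by fun_prop, fun _ => by fun_prop, fun n z hz => ?_, fun z hz => ?_⟩
  · simpa [indicator_of_notMem hz] using hstep z
  · refine (hstep z).trans ?_
    rw [indicator_of_mem hz]
    exact ENNReal.ofReal_add_le

theorem isDriftSequence_polynomialRate (hPE : PolynomialDrift P V c α b C) (hV : Measurable V)
    (hV1 : ∀ x, 1 ≤ V x) (hα : α ∈ Ioo (0 : ℝ) 1) {κ : ℝ} (hκ : 0 < κ)
    (hκc : 2 ≤ κ * (c * (1 - α))) {K : ℝ} (hK : ∀ z ∈ C, V z ≤ K) :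
    IsDriftSequence P C (fun n z => ENNReal.ofReal (((n : ℝ) + κ * V z ^ (1 - α)) ^ (1 - α)⁻¹))
      (fun n _ => ENNReal.ofReal (((n : ℝ) + 1) ^ ((1 - α)⁻¹ - 1)))
      (ENNReal.ofReal ((1 + κ * (K + b) ^ (1 - α)) ^ (1 - α)⁻¹ + 1)) := by
  have hjensen : ∀ {a : ℝ} (z : 𝓧) {u : ℝ}, 0 ≤ a → 0 < u →
      ∫⁻ y, ENNReal.ofReal (V y) ∂P z ≤ ENNReal.ofReal u →
      ∫⁻ y, ENNReal.ofReal ((a + κ * V y ^ (1 - α)) ^ (1 - α)⁻¹) ∂P z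
        ≤ ENNReal.ofReal ((a + κ * u ^ (1 - α)) ^ (1 - α)⁻¹) := fun z _ ha hu hPz =>
    lintegral_ofReal_add_mul_rpow_rpow_inv_le hV (fun y => by linarith [hV1 y]) ha hκ
      (by linarith [hα.2]) (by linarith [hα.1]) hu hPz
  refine ⟨fun _ => by fun_prop, fun _ => measurable_const, fun n z hz => ?_, fun z hz => ?_⟩
  · have hu : 1 ≤ V z - c * V z ^ α := by simpa [indicator_of_notMem hz] using hPE.one_le hV1 z
    have hPz : ∫⁻ y, ENNReal.ofReal (V y) ∂P z ≤ ENNReal.ofReal (V z - c * V z ^ α) := by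
      simpa [indicator_of_notMem hz] using hPE z
    calc _ ≤ ENNReal.ofReal (((n : ℝ) + 1 + κ * (V z - c * V z ^ α) ^ (1 - α)) ^ (1 - α)⁻¹)
          + ENNReal.ofReal (((n : ℝ) + 1) ^ ((1 - α)⁻¹ - 1)) := by
          push_cast
          gcongr
          exact hjensen z (by positivity) (by linarith) hPz
      _ = ENNReal.ofReal (((n : ℝ) + 1 + κ * (V z - c * V z ^ α) ^ (1 - α)) ^ (1 - α)⁻¹
          + ((n : ℝ) + 1) ^ ((1 - α)⁻¹ - 1)) :=
          (ENNReal.ofReal_add (Real.rpow_nonneg (by positivity) _) (by positivity)).symm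
      _ ≤ _ := ENNReal.ofReal_le_ofReal (add_one_add_mul_rpow_rpow_inv_add_le n.cast_nonneg hα
          hκ.le hκc (by linarith [hV1 z]) (by linarith))
  · have hu : 1 ≤ V z - c * V z ^ α + b := by simpa [indicator_of_mem hz] using hPE.one_le hV1 z
    have hPz : ∫⁻ y, ENNReal.ofReal (V y) ∂P z ≤ ENNReal.ofReal (V z - c * V z ^ α + b) := by
      simpa [indicator_of_mem hz] using hPE z
    have hc : 0 < c := pos_of_mul_pos_left
      (pos_of_mul_pos_right (by linarith : 0 < κ * (c * (1 - α))) hκ.le) (by linarith [hα.2])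
    have hcV : 0 ≤ c * V z ^ α := mul_nonneg hc.le (Real.rpow_nonneg (by linarith [hV1 z]) _)
    have hγ : 0 ≤ 1 - α := by linarith [hα.2]
    have hp : 0 ≤ (1 - α)⁻¹ := inv_nonneg.2 hγ
    have hKb : 0 ≤ K + b := by linarith [hK z hz]
    calc _ ≤ ENNReal.ofReal ((1 + κ * (V z - c * V z ^ α + b) ^ (1 - α)) ^ (1 - α)⁻¹)
          + ENNReal.ofReal 1 := by
          push_cast
          gcongr
          · exact hjensen z zero_le_one (by linarith) hPz
          · simp
      _ ≤ ENNReal.ofReal ((1 + κ * (K + b) ^ (1 - α)) ^ (1 - α)⁻¹) + ENNReal.ofReal 1 := by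
          gcongr
          linarith [hK z hz]
      _ = ENNReal.ofReal ((1 + κ * (K + b) ^ (1 - α)) ^ (1 - α)⁻¹ + 1) :=
          (ENNReal.ofReal_add (by positivity) zero_le_one).symm
      _ ≤ _ := le_add_self

end PolynomialDrift

end Chain

/-- Suppose the Markov kernel `P` satisfies PE(V, c, α, b, C) and let
`ρ ∈ [1, 1/(1−α)]`.  With `V_ρ(x) = V(x)^{1−ρ(1−α)}` and `r_ρ(n) = (n+1)^{ρ−1}`, there
is a constant `M < ∞` such that for all `x`,
`𝔼_x[ Σ_{n=0}^{τ_C − 1} r_ρ(n)·V_ρ(X_n) ] ≤ M·V(x)`. -/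
theorem stmt_4 {𝓧 : Type*} [MeasurableSpace 𝓧]
    (P : ProbabilityTheory.Kernel 𝓧 𝓧) [ProbabilityTheory.IsMarkovKernel P]
    (μ : 𝓧 → Measure (ℕ → 𝓧)) (hμ : IsMarkovTrajectory P μ)
    (V : 𝓧 → ℝ) (hVmeas : Measurable V) (hV1 : ∀ x, 1 ≤ V x)
    (c α b : ℝ) (hα : α ∈ Set.Ioo (0 : ℝ) 1) (hc : 0 < c) (hb : 0 < b)
    (C : Set 𝓧) (hC : MeasurableSet C) (hVC : ∃ K : ℝ, ∀ x ∈ C, V x ≤ K)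
    (hPE : ∀ x, ∫⁻ y, ENNReal.ofReal (V y) ∂(P x)
      ≤ ENNReal.ofReal (V x - c * V x ^ α + C.indicator (fun _ => b) x))
    (ρ : ℝ) (hρ : ρ ∈ Set.Icc (1 : ℝ) (1 / (1 - α))) :
    ∃ M : ℝ, 0 ≤ M ∧
      ∀ x, ∫⁻ ω, (∑' n : ℕ,
          Set.indicator {k : ℕ | (k : ℕ∞) < returnTime C ω}
            (fun k => ENNReal.ofReal (((k : ℝ) + 1) ^ (ρ - 1)
              * V (ω k) ^ (1 - ρ * (1 - α)))) n) ∂(μ x)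
        ≤ ENNReal.ofReal (M * V x) := by
  obtain ⟨K, hK⟩ := hVC
  have hPE : PolynomialDrift P V c α b C := hPE
  -- `max K 0` keeps the constant nonnegative even when `C` is empty
  have hK' : ∀ z ∈ C, V z ≤ max K 0 := fun z hz => (hK z hz).trans (le_max_left K 0)
  have hγ : 0 < 1 - α := by linarith [hα.2]
  set κ := 2 / (c * (1 - α)) with hκ_def
  have hκ : 0 < κ := by positivity
  have hκc : 2 ≤ κ * (c * (1 - α)) := by rw [hκ_def, div_mul_cancel₀ _ (by positivity)]
  have hdrift := (hPE.isDriftSequence_polynomialRate hVmeas hV1 hα hκ hκc hK').add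
    (hPE.isDriftSequence_rpow hVmeas hV1 hc)
  set B₀ := (1 + κ * (max K 0 + b) ^ (1 - α)) ^ (1 - α)⁻¹ + 1
  have hB₀ : 0 ≤ B₀ := by positivity
  refine ⟨κ ^ (1 - α)⁻¹ + c⁻¹ + (B₀ + c⁻¹ * b), by positivity,
    fun x => le_trans ?_ ((hdrift.lintegral_tsum_le hμ hC x).trans ?_)⟩
  · refine lintegral_mono fun ω => ENNReal.tsum_le_tsum fun n => indicator_le_indicator ?_
    exact (ENNReal.ofReal_le_ofReal (rpow_mul_rpow_le_rpow_add_rpow hα hρ (by positivity)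
      (by linarith [hV1 (ω n)]))).trans ENNReal.ofReal_add_le
  · have hVx := hV1 x
    have hW0 : ((0 : ℝ) + κ * V x ^ (1 - α)) ^ (1 - α)⁻¹ = κ ^ (1 - α)⁻¹ * V x := by
      rw [zero_add, Real.mul_rpow hκ.le (by positivity), ← Real.rpow_mul (by linarith),
        mul_inv_cancel₀ hγ.ne', Real.rpow_one]
    simp only [Pi.add_apply, Nat.cast_zero, hW0]
    rw [← ENNReal.ofReal_add (by positivity) (by positivity),
      ← ENNReal.ofReal_add hB₀ (by positivity),
      ← ENNReal.ofReal_add (by positivity) (by positivity)]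
    have hconst : 0 ≤ B₀ + c⁻¹ * b := by positivity
    exact ENNReal.ofReal_le_ofReal (by nlinarith [mul_le_mul_of_nonneg_left hVx hconst])
end

section
/- Suppose the Markov kernel P satisfies PE(V, c, α, b, C) with α > 3/4 and C = {x : V(x) ≤ d} a sublevel set, and suppose every sublevel set {x : V(x) ≤ r} is small. Then the chain is tame with respect to the scale function V^{1/2}. -/
open MeasureTheory ProbabilityTheory ENNReal Set

/-- `n`-fold composition power of a kernel. -/
noncomputable def kpow {𝓧 : Type*} [MeasurableSpace 𝓧]
    (P : ProbabilityTheory.Kernel 𝓧 𝓧) : ℕ → ProbabilityTheory.Kernel 𝓧 𝓧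
  | 0 => ProbabilityTheory.Kernel.id
  | n + 1 => P.comp (kpow P n)

/-- The taming function `F(z) = ⌈λ z^δ⌉` for `z > d'` and `F(z) = 1` for `z ≤ d'`. -/
noncomputable def tamingF (lam δ d' : ℝ) (z : ℝ) : ℕ :=
  if z ≤ d' then 1 else ⌈lam * z ^ δ⌉₊

/-- The bound `δ⁻¹·log(1−δ)`, interpreted as `−1` when `δ = 0`. -/
noncomputable def tameBound (δ : ℝ) : ℝ :=
  if δ = 0 then -1 else δ⁻¹ * Real.log (1 - δ)

/-- `C` is a small set for the kernel `P`. -/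
def IsSmallSet {𝓧 : Type*} [MeasurableSpace 𝓧]
    (P : ProbabilityTheory.Kernel 𝓧 𝓧) (C : Set 𝓧) : Prop :=
  ∃ m : ℕ, 0 < m ∧ ∃ ε : ℝ, 0 < ε ∧ ε ≤ 1 ∧ ∃ ν : Measure 𝓧, IsProbabilityMeasure ν ∧
    ∀ x ∈ C, ∀ E : Set 𝓧, MeasurableSet E → ENNReal.ofReal ε * ν E ≤ (kpow P m) x E

/-- The chain with kernel `P` is *tame* with respect to the scale function `V`. -/
def IsTame {𝓧 : Type*} [MeasurableSpace 𝓧]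
    (P : ProbabilityTheory.Kernel 𝓧 𝓧) (V : 𝓧 → ℝ) : Prop :=
  ∃ d' : ℝ, 1 ≤ d' ∧ IsSmallSet P {x | V x ≤ d'} ∧
    ∃ lam : ℝ, 0 < lam ∧ ∃ δ ∈ Set.Ico (0 : ℝ) 1, ∃ β ∈ Set.Ioo (0 : ℝ) 1, ∃ b' : ℝ,
      Real.log β < tameBound δ ∧
      ∀ x, ∫⁻ y, ENNReal.ofReal (V y) ∂((kpow P (tamingF lam δ d' (V x))) x)
        ≤ ENNReal.ofReal (β * V x + Set.indicator {x' | V x' ≤ d'} (fun _ => b') x)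

/-!
Write `W = V^{1/2}`, so that `V = W²` and `U := V^{1-α} = W^δ` with `δ = 2(1-α) < 1/2`.
Jensen's inequality for the concave powers turns `PE` into `PW ≤ W + √b` and, off `C`,
`PU ≤ U - (1-α)c`. The latter makes `U` a Lyapunov function for the chain killed on entering
`C`: started at `x`, it survives `n` steps with probability at most `U(x)/(n(1-α)c)` and spends an
expected time at most `U(x)/((1-α)c)` before entering `C`. Split `PⁿW(x)` at the first entrance
to `C`. After an entrance, `W` grows by at most `√b` per step, so that part is at most
`(√d + n√b) U(x)/((1-α)c)`; on survival, `W ≤ a + V/a` with `a ≍ W(x)`. For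
`n = ⌈λ W(x)^δ⌉` each term is a fraction of `β W(x)` once `W(x)` is large; for the re-entry
term this is `U² = W^{2δ} = o(W)`, which is where `α > 3/4` enters.
-/

lemma ENNReal.le_ofReal_div_of_ofReal_mul_le {m : ℝ≥0∞} {p q : ℝ} (hp : 0 < p)
    (h : ENNReal.ofReal p * m ≤ ENNReal.ofReal q) : m ≤ ENNReal.ofReal (q / p) := by
  rw [ENNReal.ofReal_div_of_pos hp, ENNReal.le_div_iff_mul_le
    (Or.inl (ENNReal.ofReal_pos.mpr hp).ne') (Or.inl ENNReal.ofReal_ne_top), mul_comm]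
  exact h

lemma MeasureTheory.lintegral_rpow_le_rpow_lintegral {𝓧 : Type*} [MeasurableSpace 𝓧]
    {μ : Measure 𝓧} [IsProbabilityMeasure μ] {f : 𝓧 → ℝ≥0∞} (hf : AEMeasurable f μ) {p : ℝ}
    (hp0 : 0 ≤ p) (hp1 : p ≤ 1) :
    ∫⁻ x, f x ^ p ∂μ ≤ (∫⁻ x, f x ∂μ) ^ p := by
  simpa using ENNReal.lintegral_mul_norm_pow_le hf aemeasurable_const hp0 (sub_nonneg.mpr hp1)
    (add_sub_cancel p 1) (g := 1)

lemma MeasureTheory.lintegral_ofReal_rpow_le {𝓧 : Type*} [MeasurableSpace 𝓧]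
    {μ : Measure 𝓧} [IsProbabilityMeasure μ] {f : 𝓧 → ℝ} (hf : Measurable f)
    (hf0 : ∀ x, 0 ≤ f x) {p s : ℝ} (hp0 : 0 ≤ p) (hp1 : p ≤ 1) (hs : 0 ≤ s)
    (h : ∫⁻ x, ENNReal.ofReal (f x) ∂μ ≤ ENNReal.ofReal s) :
    ∫⁻ x, ENNReal.ofReal (f x ^ p) ∂μ ≤ ENNReal.ofReal (s ^ p) := by
  simp_rw [← ENNReal.ofReal_rpow_of_nonneg (hf0 _) hp0, ← ENNReal.ofReal_rpow_of_nonneg hs hp0]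
  exact (lintegral_rpow_le_rpow_lintegral hf.ennreal_ofReal.aemeasurable hp0 hp1).trans
    (ENNReal.rpow_le_rpow h hp0)

lemma MeasureTheory.lintegral_ofReal_le_add_inv_mul_lintegral_sq {𝓧 : Type*}
    [MeasurableSpace 𝓧] {μ : Measure 𝓧} {W : 𝓧 → ℝ} (hWm : Measurable W) (hW0 : ∀ x, 0 ≤ W x)
    {a : ℝ} (ha : 0 < a) :
    ∫⁻ y, ENNReal.ofReal (W y) ∂μ
      ≤ ENNReal.ofReal a * μ univ + ENNReal.ofReal a⁻¹ * ∫⁻ y, ENNReal.ofReal (W y ^ 2) ∂μ := by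
  have hsplit : ∀ y, ENNReal.ofReal (W y)
      ≤ ENNReal.ofReal a + ENNReal.ofReal a⁻¹ * ENNReal.ofReal (W y ^ 2) := fun y ↦ by
    rw [← ENNReal.ofReal_mul (by positivity), ← ENNReal.ofReal_add ha.le (by positivity)]
    refine ENNReal.ofReal_le_ofReal ?_
    have h : a + a⁻¹ * W y ^ 2 - 2 * W y = a⁻¹ * (a - W y) ^ 2 := by field_simp; ring
    linarith [hW0 y, mul_nonneg (inv_pos.mpr ha).le (sq_nonneg (a - W y))]
  calc ∫⁻ y, ENNReal.ofReal (W y) ∂μ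
      ≤ ∫⁻ y, (ENNReal.ofReal a + ENNReal.ofReal a⁻¹ * ENNReal.ofReal (W y ^ 2)) ∂μ :=
        lintegral_mono hsplit
    _ = ENNReal.ofReal a * μ univ + ENNReal.ofReal a⁻¹ * ∫⁻ y, ENNReal.ofReal (W y ^ 2) ∂μ := by
        rw [lintegral_add_left measurable_const, lintegral_const,
          lintegral_const_mul _ (hWm.pow_const 2).ennreal_ofReal]

lemma MeasureTheory.one_le_of_lintegral_ofReal_le {𝓧 : Type*} [MeasurableSpace 𝓧]
    {μ : Measure 𝓧} [IsProbabilityMeasure μ] {f : 𝓧 → ℝ} (hf : ∀ x, 1 ≤ f x) {s : ℝ}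
    (h : ∫⁻ x, ENNReal.ofReal (f x) ∂μ ≤ ENNReal.ofReal s) : 1 ≤ s := by
  refine ENNReal.one_le_ofReal.mp (le_trans ?_ h)
  calc (1 : ℝ≥0∞) = ∫⁻ _, 1 ∂μ := by simp
    _ ≤ ∫⁻ x, ENNReal.ofReal (f x) ∂μ := lintegral_mono fun x ↦ ENNReal.one_le_ofReal.mpr (hf x)

lemma Real.rpow_sub_mul_rpow_add_le {v c α : ℝ} (hv : 0 < v) (hα0 : 0 ≤ α) (hα1 : α ≤ 1)
    (hs : 0 ≤ v - c * v ^ α) :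
    (v - c * v ^ α) ^ (1 - α) + (1 - α) * c ≤ v ^ (1 - α) := by
  set t := c * v ^ (α - 1)
  have hvt : v - c * v ^ α = v * (1 + -t) := by
    simp only [t, Real.rpow_sub_one hv.ne']
    field_simp
    ring
  have ht : -1 ≤ -t := by
    have := hvt ▸ hs
    nlinarith [(mul_nonneg_iff_of_pos_left hv).mp this]
  have hcancel : v ^ (1 - α) * t = c := by
    rw [mul_left_comm, ← Real.rpow_add hv]; simp
  rw [hvt]
  calc (v * (1 + -t)) ^ (1 - α) + (1 - α) * c
      = v ^ (1 - α) * (1 + -t) ^ (1 - α) + (1 - α) * c := by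
        rw [Real.mul_rpow hv.le (by linarith)]
    _ ≤ v ^ (1 - α) * (1 + (1 - α) * -t) + (1 - α) * c := by
        gcongr
        exact rpow_one_add_le_one_add_mul_self ht (by linarith) (by linarith)
    _ = v ^ (1 - α) := by linear_combination (α - 1) * hcancel

namespace ProbabilityTheory.Kernel

variable {𝓧 : Type*} [MeasurableSpace 𝓧]

lemma kpow_eq_pow (κ : Kernel 𝓧 𝓧) (n : ℕ) : kpow κ n = κ ^ n := by
  induction n with
  | zero => rfl
  | succ n ih => rw [kpow, ih, pow_succ']; rfl

lemma pow_zero_apply (κ : Kernel 𝓧 𝓧) (x : 𝓧) : (κ ^ 0) x = Measure.dirac x := by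
  rw [pow_zero]
  rfl

lemma lintegral_pow_zero (κ : Kernel 𝓧 𝓧) (x : 𝓧) {g : 𝓧 → ℝ≥0∞} (hg : Measurable g) :
    ∫⁻ y, g y ∂(κ ^ 0) x = g x := by
  rw [pow_zero_apply, lintegral_dirac' x hg]

lemma lintegral_pow_succ (κ : Kernel 𝓧 𝓧) (n : ℕ) (x : 𝓧) {g : 𝓧 → ℝ≥0∞} (hg : Measurable g) :
    ∫⁻ y, g y ∂(κ ^ (n + 1)) x = ∫⁻ z, ∫⁻ y, g y ∂(κ ^ n) z ∂κ x := by
  rw [pow_succ]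
  exact lintegral_comp (κ ^ n) κ x hg

lemma lintegral_pow_succ' (κ : Kernel 𝓧 𝓧) (n : ℕ) (x : 𝓧) {g : 𝓧 → ℝ≥0∞}
    (hg : Measurable g) :
    ∫⁻ y, g y ∂(κ ^ (n + 1)) x = ∫⁻ z, ∫⁻ y, g y ∂κ z ∂(κ ^ n) x := by
  rw [pow_succ']
  exact lintegral_comp κ (κ ^ n) x hg

lemma pow_apply_univ_antitone {κ : Kernel 𝓧 𝓧} (hκ : ∀ z, κ z univ ≤ 1) (x : 𝓧) :
    Antitone fun n ↦ (κ ^ n) x univ := by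
  refine antitone_nat_of_succ_le fun n ↦ ?_
  rw [pow_succ_apply_eq_lintegral _ _ _ MeasurableSet.univ]
  calc ∫⁻ z, κ z univ ∂(κ ^ n) x ≤ ∫⁻ _, 1 ∂(κ ^ n) x := lintegral_mono hκ
    _ = (κ ^ n) x univ := lintegral_one

lemma lintegral_pow_le_add_mul (κ : Kernel 𝓧 𝓧) [IsMarkovKernel κ] {f : 𝓧 → ℝ≥0∞}
    (hf : Measurable f) {ε : ℝ≥0∞} (hdrift : ∀ x, ∫⁻ y, f y ∂κ x ≤ f x + ε) (n : ℕ) (x : 𝓧) :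
    ∫⁻ y, f y ∂(κ ^ n) x ≤ f x + n * ε := by
  induction n generalizing x with
  | zero => rw [lintegral_pow_zero κ x hf]; simp
  | succ n ih =>
    calc ∫⁻ y, f y ∂(κ ^ (n + 1)) x = ∫⁻ z, ∫⁻ y, f y ∂(κ ^ n) z ∂κ x :=
          lintegral_pow_succ κ n x hf
      _ ≤ ∫⁻ z, (f z + n * ε) ∂κ x := lintegral_mono ih
      _ = ∫⁻ z, f z ∂κ x + n * ε := by rw [lintegral_add_right _ measurable_const]; simp
      _ ≤ f x + ε + n * ε := by gcongr; exact hdrift x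
      _ = f x + (n + 1 : ℕ) * ε := by push_cast; ring

lemma lintegral_pow_restrict_le (κ : Kernel 𝓧 𝓧) {s : Set 𝓧} (hs : MeasurableSet s)
    {g : 𝓧 → ℝ≥0∞} (hg : Measurable g) (n : ℕ) (x : 𝓧) :
    ∫⁻ y, g y ∂(κ.restrict hs ^ n) x ≤ ∫⁻ y, g y ∂(κ ^ n) x := by
  induction n generalizing x with
  | zero => rw [lintegral_pow_zero _ x hg, lintegral_pow_zero _ x hg]
  | succ n ih =>
    rw [lintegral_pow_succ _ n x hg, lintegral_pow_succ _ n x hg, lintegral_restrict]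
    exact (setLIntegral_le_lintegral _ _).trans (lintegral_mono ih)

lemma pow_succ_apply_univ (κ : Kernel 𝓧 𝓧) (n : ℕ) (x : 𝓧) :
    (κ ^ (n + 1)) x univ = ∫⁻ z, (κ ^ n) z univ ∂κ x := by
  simpa using lintegral_pow_succ κ n x (measurable_const (a := (1 : ℝ≥0∞)))

section Killed

variable (κ : Kernel 𝓧 𝓧) {C : Set 𝓧} (hC : MeasurableSet C)

lemma pow_restrict_compl_apply_eq_zero {x : 𝓧} (hx : x ∉ C) (n : ℕ) :
    (κ.restrict hC.compl ^ n) x C = 0 := by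
  cases n with
  | zero => rw [pow_zero_apply, Measure.dirac_apply' _ hC]; simp [hx]
  | succ n =>
    rw [pow_succ_apply_eq_lintegral _ _ _ hC]
    simp [restrict_apply' _ _ _ hC]

lemma lintegral_pow_restrict_compl_add_mul_sum_le {f : 𝓧 → ℝ≥0∞} (hf : Measurable f)
    {c : ℝ≥0∞} (hdrift : ∀ z ∉ C, ∫⁻ y, f y ∂κ z + c ≤ f z) {x : 𝓧} (hx : x ∉ C) (n : ℕ) :
    ∫⁻ y, f y ∂(κ.restrict hC.compl ^ n) x
      + c * ∑ k ∈ Finset.range n, (κ.restrict hC.compl ^ k) x univ ≤ f x := by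
  set K := κ.restrict hC.compl
  induction n with
  | zero => rw [lintegral_pow_zero K x hf]; simp
  | succ n ih =>
    have hstep : ∫⁻ y, f y ∂(K ^ (n + 1)) x + c * (K ^ n) x univ ≤ ∫⁻ y, f y ∂(K ^ n) x := by
      have hout : ∀ᵐ z ∂(K ^ n) x, z ∉ C :=
        measure_eq_zero_iff_ae_notMem.mp (pow_restrict_compl_apply_eq_zero κ hC hx n)
      rw [lintegral_pow_succ' K n x hf, ← MeasureTheory.lintegral_const,
        ← lintegral_add_right _ measurable_const]
      refine lintegral_mono_ae (hout.mono fun z hz ↦ le_trans ?_ (hdrift z hz))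
      exact add_le_add ((lintegral_restrict κ hC.compl z f).trans_le
        (setLIntegral_le_lintegral _ _)) le_rfl
    calc ∫⁻ y, f y ∂(K ^ (n + 1)) x + c * ∑ k ∈ Finset.range (n + 1), (K ^ k) x univ
        = (∫⁻ y, f y ∂(K ^ (n + 1)) x + c * (K ^ n) x univ)
          + c * ∑ k ∈ Finset.range n, (K ^ k) x univ := by rw [Finset.sum_range_succ]; ring
      _ ≤ f x := (add_le_add hstep le_rfl).trans ih

lemma lintegral_pow_le_restrict_compl_add [IsMarkovKernel κ] {g : 𝓧 → ℝ≥0∞}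
    (hg : Measurable g) {M : ℝ≥0∞} {n : ℕ} (hM : ∀ j < n, ∀ y ∈ C, ∫⁻ z, g z ∂(κ ^ j) y ≤ M)
    (x : 𝓧) :
    ∫⁻ y, g y ∂(κ ^ n) x ≤ ∫⁻ y, g y ∂(κ.restrict hC.compl ^ n) x
      + M * ∑ k ∈ Finset.range n, (κ.restrict hC.compl ^ k) x univ := by
  set K := κ.restrict hC.compl
  induction n generalizing x with
  | zero => rw [lintegral_pow_zero κ x hg, lintegral_pow_zero K x hg]; simp
  | succ n ih =>
    have hinside : ∫⁻ z in C, ∫⁻ y, g y ∂(κ ^ n) z ∂κ x ≤ M :=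
      calc ∫⁻ z in C, ∫⁻ y, g y ∂(κ ^ n) z ∂κ x ≤ ∫⁻ _ in C, M ∂κ x :=
            setLIntegral_mono measurable_const fun y hy ↦ hM n n.lt_succ_self y hy
        _ = M * κ x C := MeasureTheory.setLIntegral_const C M
        _ ≤ M := mul_le_of_le_one_right' prob_le_one
    have houtside : ∫⁻ z in Cᶜ, ∫⁻ y, g y ∂(κ ^ n) z ∂κ x ≤ ∫⁻ y, g y ∂(K ^ (n + 1)) x
        + M * ∑ k ∈ Finset.range n, (K ^ (k + 1)) x univ := by
      rw [← lintegral_restrict κ hC.compl]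
      calc ∫⁻ z, ∫⁻ y, g y ∂(κ ^ n) z ∂K x
          ≤ ∫⁻ z, (∫⁻ y, g y ∂(K ^ n) z + M * ∑ k ∈ Finset.range n, (K ^ k) z univ) ∂K x :=
            lintegral_mono (ih fun j hj ↦ hM j (by omega))
        _ = ∫⁻ y, g y ∂(K ^ (n + 1)) x + M * ∑ k ∈ Finset.range n, (K ^ (k + 1)) x univ := by
          rw [lintegral_add_left hg.lintegral_kernel, lintegral_const_mul _
            (Finset.measurable_sum _ fun k _ ↦ (K ^ k).measurable_coe MeasurableSet.univ),
            lintegral_finsetSum _ fun k _ ↦ (K ^ k).measurable_coe MeasurableSet.univ,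
            lintegral_pow_succ K n x hg]
          simp only [pow_succ_apply_univ]
    calc ∫⁻ y, g y ∂(κ ^ (n + 1)) x
        = ∫⁻ z in Cᶜ, ∫⁻ y, g y ∂(κ ^ n) z ∂κ x + ∫⁻ z in C, ∫⁻ y, g y ∂(κ ^ n) z ∂κ x := by
          rw [lintegral_pow_succ κ n x hg, add_comm, lintegral_add_compl _ hC]
      _ ≤ (∫⁻ y, g y ∂(K ^ (n + 1)) x + M * ∑ k ∈ Finset.range n, (K ^ (k + 1)) x univ) + M :=
          add_le_add houtside hinside
      _ = ∫⁻ y, g y ∂(K ^ (n + 1)) x + M * ∑ k ∈ Finset.range (n + 1), (K ^ k) x univ := by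
          rw [Finset.sum_range_succ', pow_zero_apply, measure_univ]; ring

lemma natCast_mul_mul_pow_restrict_compl_apply_univ_le [IsMarkovKernel κ] {f : 𝓧 → ℝ≥0∞}
    (hf : Measurable f) {c : ℝ≥0∞} (hdrift : ∀ z ∉ C, ∫⁻ y, f y ∂κ z + c ≤ f z) {x : 𝓧}
    (hx : x ∉ C) (n : ℕ) :
    n * c * (κ.restrict hC.compl ^ n) x univ ≤ f x := by
  have hsub : ∀ z, κ.restrict hC.compl z univ ≤ 1 := fun z ↦ by
    rw [restrict_apply' _ _ _ MeasurableSet.univ]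
    exact prob_le_one
  have hmono : n * (κ.restrict hC.compl ^ n) x univ
      ≤ ∑ k ∈ Finset.range n, (κ.restrict hC.compl ^ k) x univ := by
    simpa using Finset.card_nsmul_le_sum (Finset.range n) _ _
      fun k hk ↦ pow_apply_univ_antitone hsub x (Finset.mem_range.mp hk).le
  calc n * c * (κ.restrict hC.compl ^ n) x univ
      = c * (n * (κ.restrict hC.compl ^ n) x univ) := by ring
    _ ≤ c * ∑ k ∈ Finset.range n, (κ.restrict hC.compl ^ k) x univ := by gcongr
    _ ≤ f x := le_add_self.trans
      (lintegral_pow_restrict_compl_add_mul_sum_le κ hC hf hdrift hx n)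

end Killed

end ProbabilityTheory.Kernel

section

open Filter Topology ProbabilityTheory.Kernel

variable {𝓧 : Type*} [MeasurableSpace 𝓧]

lemma lintegral_pow_le_of_drift (P : Kernel 𝓧 𝓧) [IsMarkovKernel P] {W : 𝓧 → ℝ}
    (hWm : Measurable W) (hW0 : ∀ x, 0 ≤ W x) {C : Set 𝓧} (hC : MeasurableSet C)
    {R b₁ b₂ c₀ δ : ℝ} (hR : 0 ≤ R) (hb₁ : 0 ≤ b₁) (hb₂ : 0 ≤ b₂) (hc₀ : 0 < c₀)
    (hCR : ∀ y ∈ C, W y ≤ R)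
    (hsq : ∀ x, ∫⁻ y, ENNReal.ofReal (W y ^ 2) ∂P x ≤ ENNReal.ofReal (W x ^ 2) + ENNReal.ofReal b₁)
    (hlin : ∀ x, ∫⁻ y, ENNReal.ofReal (W y) ∂P x ≤ ENNReal.ofReal (W x) + ENNReal.ofReal b₂)
    (hpow : ∀ x ∉ C, ∫⁻ y, ENNReal.ofReal (W y ^ δ) ∂P x + ENNReal.ofReal c₀
      ≤ ENNReal.ofReal (W x ^ δ))
    {x : 𝓧} (hx : x ∉ C) {n : ℕ} (hn : 0 < n) {a : ℝ} (ha : 0 < a) :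
    ∫⁻ y, ENNReal.ofReal (W y) ∂(P ^ n) x ≤ ENNReal.ofReal (a * (W x ^ δ / (n * c₀))
      + (W x ^ 2 + n * b₁) / a + (R + n * b₂) * (W x ^ δ / c₀)) := by
  set K := P.restrict hC.compl
  have hWδm : Measurable fun y ↦ ENNReal.ofReal (W y ^ δ) :=
    (hWm.pow_const δ).ennreal_ofReal
  have hU0 : 0 ≤ W x ^ δ := Real.rpow_nonneg (hW0 x) δ
  have hreentry : ∀ j < n, ∀ y ∈ C,
      ∫⁻ z, ENNReal.ofReal (W z) ∂(P ^ j) y ≤ ENNReal.ofReal (R + n * b₂) := by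
    intro j hj y hy
    calc ∫⁻ z, ENNReal.ofReal (W z) ∂(P ^ j) y
        ≤ ENNReal.ofReal (W y) + j * ENNReal.ofReal b₂ :=
          lintegral_pow_le_add_mul P hWm.ennreal_ofReal hlin j y
      _ ≤ ENNReal.ofReal R + n * ENNReal.ofReal b₂ := by
          gcongr
          exact hCR y hy
      _ = ENNReal.ofReal (R + n * b₂) := by
          rw [ENNReal.ofReal_add hR (by positivity), ENNReal.ofReal_mul (by positivity),
            ENNReal.ofReal_natCast]
  have hmass : (K ^ n) x univ ≤ ENNReal.ofReal (W x ^ δ / (n * c₀)) := by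
    refine ENNReal.le_ofReal_div_of_ofReal_mul_le (by positivity) ?_
    rw [ENNReal.ofReal_mul (by positivity), ENNReal.ofReal_natCast]
    exact natCast_mul_mul_pow_restrict_compl_apply_univ_le P hC hWδm hpow hx n
  have hsum : ∑ k ∈ Finset.range n, (K ^ k) x univ ≤ ENNReal.ofReal (W x ^ δ / c₀) :=
    ENNReal.le_ofReal_div_of_ofReal_mul_le hc₀
      (le_add_self.trans (lintegral_pow_restrict_compl_add_mul_sum_le P hC hWδm hpow hx n))
  have hkilled : ∫⁻ y, ENNReal.ofReal (W y) ∂(K ^ n) x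
      ≤ ENNReal.ofReal a * (K ^ n) x univ
        + ENNReal.ofReal a⁻¹ * ENNReal.ofReal (W x ^ 2 + n * b₁) := by
    refine (lintegral_ofReal_le_add_inv_mul_lintegral_sq hWm hW0 ha).trans ?_
    rw [ENNReal.ofReal_add (by positivity) (by positivity), ENNReal.ofReal_mul (by positivity),
      ENNReal.ofReal_natCast]
    gcongr
    exact (lintegral_pow_restrict_le P hC.compl (hWm.pow_const 2).ennreal_ofReal n x).trans
      (lintegral_pow_le_add_mul P (hWm.pow_const 2).ennreal_ofReal hsq n x)
  calc ∫⁻ y, ENNReal.ofReal (W y) ∂(P ^ n) x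
      ≤ ∫⁻ y, ENNReal.ofReal (W y) ∂(K ^ n) x
        + ENNReal.ofReal (R + n * b₂) * ∑ k ∈ Finset.range n, (K ^ k) x univ :=
        lintegral_pow_le_restrict_compl_add P hC hWm.ennreal_ofReal hreentry x
    _ ≤ ENNReal.ofReal a * ENNReal.ofReal (W x ^ δ / (n * c₀))
        + ENNReal.ofReal a⁻¹ * ENNReal.ofReal (W x ^ 2 + n * b₁)
        + ENNReal.ofReal (R + n * b₂) * ENNReal.ofReal (W x ^ δ / c₀) := by
        gcongr
        exact hkilled.trans (by gcongr)
    _ = _ := by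
        rw [← ENNReal.ofReal_mul ha.le, ← ENNReal.ofReal_mul (by positivity),
          ← ENNReal.ofReal_mul (by positivity), ← ENNReal.ofReal_add (by positivity)
            (by positivity), ← ENNReal.ofReal_add (by positivity) (by positivity),
          div_eq_inv_mul _ a]

lemma lintegral_pow_ceil_le_of_drift (P : Kernel 𝓧 𝓧) [IsMarkovKernel P] {W : 𝓧 → ℝ}
    (hWm : Measurable W) (hW1 : ∀ x, 1 ≤ W x) {C : Set 𝓧} (hC : MeasurableSet C)
    {R b₁ b₂ c₀ δ : ℝ} (hR : 0 ≤ R) (hb₁ : 0 ≤ b₁) (hb₂ : 0 ≤ b₂) (hc₀ : 0 < c₀)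
    (hδ0 : 0 ≤ δ) (hδ1 : δ ≤ 1) (hCR : ∀ y ∈ C, W y ≤ R)
    (hsq : ∀ x, ∫⁻ y, ENNReal.ofReal (W y ^ 2) ∂P x ≤ ENNReal.ofReal (W x ^ 2) + ENNReal.ofReal b₁)
    (hlin : ∀ x, ∫⁻ y, ENNReal.ofReal (W y) ∂P x ≤ ENNReal.ofReal (W x) + ENNReal.ofReal b₂)
    (hpow : ∀ x ∉ C, ∫⁻ y, ENNReal.ofReal (W y ^ δ) ∂P x + ENNReal.ofReal c₀
      ≤ ENNReal.ofReal (W x ^ δ))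
    {β lam : ℝ} (hβ : 0 < β) (hlam : 16 / (β ^ 2 * c₀) ≤ lam) {x : 𝓧} (hx : x ∉ C)
    (hxb₁ : (lam + 1) * b₁ ≤ W x)
    (hxb₂ : (R + (lam + 1) * b₂) / c₀ * (W x ^ δ) ^ 2 ≤ β / 4 * W x) :
    ∫⁻ y, ENNReal.ofReal (W y) ∂(P ^ ⌈lam * W x ^ δ⌉₊) x ≤ ENNReal.ofReal (β * W x) := by
  set w := W x
  set u := w ^ δ
  set n := ⌈lam * u⌉₊
  have hw : 1 ≤ w := hW1 x
  have hu : 1 ≤ u := Real.one_le_rpow hw hδ0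
  have huw : u ≤ w := by simpa using Real.rpow_le_rpow_of_exponent_le hw hδ1
  have hlam0 : 0 < lam := lt_of_lt_of_le (by positivity) hlam
  have hnu : lam * u ≤ n := Nat.le_ceil _
  have hn : (n : ℝ) ≤ (lam + 1) * u := by
    linarith [Nat.ceil_lt_add_one (by positivity : 0 ≤ lam * u)]
  have hn0 : 0 < n := Nat.ceil_pos.mpr (by positivity)
  have hn0' : (0 : ℝ) < n := by exact_mod_cast hn0
  -- with `a = 4w/β` the three terms are at most `βw/4`, `βw/2` and `βw/4`
  refine (lintegral_pow_le_of_drift P hWm (fun y ↦ by linarith [hW1 y]) hC hR hb₁ hb₂ hc₀ hCR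
    hsq hlin hpow hx hn0 (a := 4 * w / β) (by positivity)).trans (ENNReal.ofReal_le_ofReal ?_)
  have h₁ : 4 * w / β * (u / (n * c₀)) ≤ β / 4 * w := by
    have : 16 * u ≤ β ^ 2 * c₀ * n := by
      rw [div_le_iff₀ (by positivity)] at hlam
      nlinarith
    rw [div_mul_div_comm, div_le_iff₀ (by positivity)]
    nlinarith
  have h₂ : (w ^ 2 + n * b₁) / (4 * w / β) ≤ β / 2 * w := by
    have : n * b₁ ≤ w ^ 2 := by nlinarith
    rw [div_le_iff₀ (by positivity)]
    field_simp
    nlinarith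
  have h₃ : (R + n * b₂) * (u / c₀) ≤ β / 4 * w := by
    calc (R + n * b₂) * (u / c₀) ≤ (R + (lam + 1) * b₂) * u * (u / c₀) := by
          gcongr
          nlinarith
      _ = (R + (lam + 1) * b₂) / c₀ * u ^ 2 := by ring
      _ ≤ β / 4 * w := hxb₂
  linarith

lemma tameBound_neg {δ : ℝ} (hδ0 : 0 ≤ δ) (hδ1 : δ < 1) : tameBound δ < 0 := by
  unfold tameBound
  split_ifs with h
  · norm_num
  · have hδpos := lt_of_le_of_ne hδ0 (Ne.symm h)
    exact mul_neg_of_pos_of_neg (inv_pos.mpr hδpos) (Real.log_neg (by linarith) (by linarith))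

lemma exists_log_lt_tameBound {δ : ℝ} (hδ0 : 0 ≤ δ) (hδ1 : δ < 1) :
    ∃ β ∈ Ioo (0 : ℝ) 1, Real.log β < tameBound δ := by
  have hneg := tameBound_neg hδ0 hδ1
  refine ⟨Real.exp (tameBound δ) / 2, ⟨by positivity, ?_⟩, ?_⟩
  · linarith [Real.exp_lt_one_iff.mpr hneg]
  · rw [Real.log_div (Real.exp_ne_zero _) two_ne_zero, Real.log_exp]
    linarith [Real.log_pos one_lt_two]

lemma eventually_mul_rpow_sq_le {δ : ℝ} (hδ : δ < 1 / 2) (A : ℝ) {ε : ℝ} (hε : 0 < ε) :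
    ∀ᶠ w in atTop, A * (w ^ δ) ^ 2 ≤ ε * w := by
  have hlim : Tendsto (fun w : ℝ ↦ A * w ^ (-(1 - 2 * δ))) atTop (𝓝 0) := by
    simpa using (tendsto_rpow_neg_atTop (by linarith : 0 < 1 - 2 * δ)).const_mul A
  filter_upwards [hlim.eventually_le_const hε, eventually_gt_atTop 0] with w hw hw0
  calc A * (w ^ δ) ^ 2 = A * w ^ (-(1 - 2 * δ)) * w := by
        rw [← Real.rpow_mul_natCast hw0.le, mul_assoc, ← Real.rpow_add_one hw0.ne']
        congr 2
        push_cast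
        ring
    _ ≤ ε * w := by gcongr

theorem isTame_of_drift (P : Kernel 𝓧 𝓧) [IsMarkovKernel P] {W : 𝓧 → ℝ}
    (hWm : Measurable W) (hW1 : ∀ x, 1 ≤ W x) {C : Set 𝓧} (hC : MeasurableSet C)
    {R b₁ b₂ c₀ δ : ℝ} (hR : 0 ≤ R) (hb₁ : 0 ≤ b₁) (hb₂ : 0 ≤ b₂) (hc₀ : 0 < c₀)
    (hδ0 : 0 ≤ δ) (hδ : δ < 1 / 2) (hCR : ∀ y ∈ C, W y ≤ R)
    (hsq : ∀ x, ∫⁻ y, ENNReal.ofReal (W y ^ 2) ∂P x ≤ ENNReal.ofReal (W x ^ 2) + ENNReal.ofReal b₁)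
    (hlin : ∀ x, ∫⁻ y, ENNReal.ofReal (W y) ∂P x ≤ ENNReal.ofReal (W x) + ENNReal.ofReal b₂)
    (hpow : ∀ x ∉ C, ∫⁻ y, ENNReal.ofReal (W y ^ δ) ∂P x + ENNReal.ofReal c₀
      ≤ ENNReal.ofReal (W x ^ δ))
    (hsmall : ∀ r, 0 ≤ r → IsSmallSet P {x | W x ≤ r}) :
    IsTame P W := by
  obtain ⟨β, ⟨hβ0, hβ1⟩, hβlog⟩ := exists_log_lt_tameBound hδ0 (by linarith)
  set lam := max (16 / (β ^ 2 * c₀)) 1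
  obtain ⟨d₀, hd₀⟩ := eventually_atTop.mp
    (eventually_mul_rpow_sq_le hδ ((R + (lam + 1) * b₂) / c₀) (by positivity : 0 < β / 4))
  set d' := max (max 1 R) (max ((lam + 1) * b₁) d₀)
  have hd'R : R ≤ d' := le_max_of_le_left (le_max_right _ _)
  have hd'1 : 1 ≤ d' := le_max_of_le_left (le_max_left _ _)
  refine ⟨d', hd'1, hsmall d' (by linarith), lam,
    lt_of_lt_of_le one_pos (le_max_right _ _), δ, ⟨hδ0, by linarith⟩, β, ⟨hβ0, hβ1⟩, d' + b₂,
    hβlog, fun x ↦ ?_⟩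
  rw [kpow_eq_pow, tamingF]
  by_cases hx : W x ≤ d'
  · rw [if_pos hx, pow_one, indicator_of_mem (show x ∈ {x' | W x' ≤ d'} from hx)]
    refine (hlin x).trans ?_
    rw [← ENNReal.ofReal_add (by linarith [hW1 x]) hb₂]
    refine ENNReal.ofReal_le_ofReal ?_
    nlinarith [hW1 x]
  · rw [if_neg hx, indicator_of_notMem (show x ∉ {x' | W x' ≤ d'} from hx), add_zero]
    have hxC : x ∉ C := fun h ↦ hx ((hCR x h).trans hd'R)
    push Not at hx
    exact lintegral_pow_ceil_le_of_drift P hWm hW1 hC hR hb₁ hb₂ hc₀ hδ0 (by linarith) hCR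
      hsq hlin hpow hβ0 (le_max_left _ _) hxC
      (le_trans (le_max_of_le_right (le_max_left _ _)) hx.le)
      (hd₀ _ (le_trans (le_max_of_le_right (le_max_right _ _)) hx.le))

/-- The drift condition `PE(V, c, α, b, C)`. -/
def IsPolynomialDrift (P : Kernel 𝓧 𝓧) (V : 𝓧 → ℝ) (c α b : ℝ) (C : Set 𝓧) : Prop :=
  ∀ x, ∫⁻ y, ENNReal.ofReal (V y) ∂P x
    ≤ ENNReal.ofReal (V x - c * V x ^ α + C.indicator (fun _ ↦ b) x)

lemma sub_mul_rpow_add_le_add {v c α b i : ℝ} (hv : 0 ≤ v) (hc : 0 ≤ c) (hi : i ≤ b) :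
    v - c * v ^ α + i ≤ v + b := by
  nlinarith [Real.rpow_nonneg hv α]

namespace IsPolynomialDrift

variable {P : Kernel 𝓧 𝓧} {V : 𝓧 → ℝ} {c α b : ℝ} {C : Set 𝓧}

lemma lintegral_le_add (h : IsPolynomialDrift P V c α b C) (hV0 : ∀ x, 0 ≤ V x) (hc : 0 ≤ c)
    (hb : 0 ≤ b) (x : 𝓧) :
    ∫⁻ y, ENNReal.ofReal (V y) ∂P x ≤ ENNReal.ofReal (V x) + ENNReal.ofReal b :=
  (h x).trans <| (ENNReal.ofReal_le_ofReal <| sub_mul_rpow_add_le_add (hV0 x) hc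
    (indicator_le_self' (fun _ _ ↦ hb) x)).trans ENNReal.ofReal_add_le

lemma lintegral_rpow_half_le [IsMarkovKernel P] (h : IsPolynomialDrift P V c α b C)
    (hVm : Measurable V) (hV1 : ∀ x, 1 ≤ V x) (hc : 0 ≤ c) (hb : 0 ≤ b) (x : 𝓧) :
    ∫⁻ y, ENNReal.ofReal (V y ^ (1 / 2 : ℝ)) ∂P x
      ≤ ENNReal.ofReal (V x ^ (1 / 2 : ℝ)) + ENNReal.ofReal (b ^ (1 / 2 : ℝ)) := by
  have hV0 : ∀ x, 0 ≤ V x := fun x ↦ zero_le_one.trans (hV1 x)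
  have hs : 0 ≤ V x - c * V x ^ α + C.indicator (fun _ ↦ b) x :=
    zero_le_one.trans (one_le_of_lintegral_ofReal_le hV1 (h x))
  refine (lintegral_ofReal_rpow_le hVm hV0 (by norm_num) (by norm_num) hs (h x)).trans ?_
  rw [← ENNReal.ofReal_add (Real.rpow_nonneg (hV0 x) _) (Real.rpow_nonneg hb _)]
  have hsV : V x - c * V x ^ α + C.indicator (fun _ ↦ b) x ≤ V x + b :=
    sub_mul_rpow_add_le_add (hV0 x) hc (indicator_le_self' (fun _ _ ↦ hb) x)
  exact ENNReal.ofReal_le_ofReal ((Real.rpow_le_rpow hs hsV (by norm_num)).trans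
    (Real.rpow_add_le_add_rpow (hV0 x) hb (by norm_num) (by norm_num)))

lemma lintegral_rpow_one_sub_add_le [IsMarkovKernel P] (h : IsPolynomialDrift P V c α b C)
    (hVm : Measurable V) (hV1 : ∀ x, 1 ≤ V x) (hc : 0 ≤ c) (hα0 : 0 ≤ α) (hα1 : α ≤ 1) {x : 𝓧}
    (hx : x ∉ C) :
    ∫⁻ y, ENNReal.ofReal (V y ^ (1 - α)) ∂P x + ENNReal.ofReal ((1 - α) * c)
      ≤ ENNReal.ofReal (V x ^ (1 - α)) := by
  have hV0 : ∀ x, 0 ≤ V x := fun x ↦ zero_le_one.trans (hV1 x)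
  have hx' := h x
  rw [indicator_of_notMem hx, add_zero] at hx'
  have hs : 0 ≤ V x - c * V x ^ α := zero_le_one.trans (one_le_of_lintegral_ofReal_le hV1 hx')
  calc ∫⁻ y, ENNReal.ofReal (V y ^ (1 - α)) ∂P x + ENNReal.ofReal ((1 - α) * c)
      ≤ ENNReal.ofReal ((V x - c * V x ^ α) ^ (1 - α)) + ENNReal.ofReal ((1 - α) * c) :=
        add_le_add (lintegral_ofReal_rpow_le hVm hV0 (by linarith) (by linarith) hs hx') le_rfl
    _ = ENNReal.ofReal ((V x - c * V x ^ α) ^ (1 - α) + (1 - α) * c) :=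
        (ENNReal.ofReal_add (Real.rpow_nonneg hs _) (mul_nonneg (by linarith) hc)).symm
    _ ≤ ENNReal.ofReal (V x ^ (1 - α)) := ENNReal.ofReal_le_ofReal
        (Real.rpow_sub_mul_rpow_add_le (by linarith [hV1 x]) hα0 hα1 hs)

end IsPolynomialDrift

end

/-- Theorem 22: a chain satisfying PE(V, c, α, b, C) with `α > 3/4`,
`C = [V ≤ d]` a sublevel set, and all sublevel sets of `V` small, is tame with respect to
the scale function `V^{1/2}`. -/
theorem stmt_11 {𝓧 : Type*} [MeasurableSpace 𝓧]
    (P : ProbabilityTheory.Kernel 𝓧 𝓧) [ProbabilityTheory.IsMarkovKernel P]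
    (V : 𝓧 → ℝ) (hVmeas : Measurable V) (hV1 : ∀ x, 1 ≤ V x)
    (c α b d : ℝ) (hα : α ∈ Set.Ioo (0 : ℝ) 1) (hα' : 3 / 4 < α)
    (hc : 0 < c) (hb : 0 < b)
    (C : Set 𝓧) (hCdef : C = {x | V x ≤ d})
    (hPE : ∀ x, ∫⁻ y, ENNReal.ofReal (V y) ∂(P x)
      ≤ ENNReal.ofReal (V x - c * V x ^ α + C.indicator (fun _ => b) x))
    (hsmall : ∀ r : ℝ, IsSmallSet P {x | V x ≤ r}) :
    IsTame P (fun x => V x ^ (1 / 2 : ℝ)) := by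
  obtain ⟨hα0, hα1⟩ := hα
  have hV0 : ∀ x, 0 ≤ V x := fun x ↦ zero_le_one.trans (hV1 x)
  have hPE' : IsPolynomialDrift P V c α b C := hPE
  have hsq : ∀ x, (V x ^ (1 / 2 : ℝ)) ^ 2 = V x := fun x ↦ by
    rw [← Real.sqrt_eq_rpow, Real.sq_sqrt (hV0 x)]
  have hpow : ∀ x, (V x ^ (1 / 2 : ℝ)) ^ (2 * (1 - α)) = V x ^ (1 - α) := fun x ↦ by
    rw [← Real.rpow_mul (hV0 x)]; ring_nf
  refine isTame_of_drift P (hVmeas.pow_const _) (fun x ↦ Real.one_le_rpow (hV1 x) (by norm_num))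
    (hCdef ▸ measurableSet_le hVmeas measurable_const) (R := max d 1 ^ (1 / 2 : ℝ))
    (Real.rpow_nonneg (le_max_of_le_right zero_le_one) _) hb.le (b₂ := b ^ (1 / 2 : ℝ))
    (by positivity) (c₀ := (1 - α) * c) (by nlinarith)
    (δ := 2 * (1 - α)) (by linarith) (by linarith) ?_ ?_
    (hPE'.lintegral_rpow_half_le hVmeas hV1 hc.le hb.le) ?_ ?_
  · intro y hy
    rw [hCdef] at hy
    exact Real.rpow_le_rpow (hV0 y) (le_max_of_le_left hy) (by norm_num)
  · simpa only [hsq] using hPE'.lintegral_le_add hV0 hc.le hb.le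
  · simpa only [hpow] using
      fun x ↦ hPE'.lintegral_rpow_one_sub_add_le hVmeas hV1 hc.le hα0.le hα1.le
  · intro r hr
    convert hsmall (r ^ 2) using 1
    ext x
    change V x ^ (1 / 2 : ℝ) ≤ r ↔ V x ≤ r ^ 2
    rw [← Real.sqrt_eq_rpow, Real.sqrt_le_left hr]
end

section
/- Suppose the Markov kernel P satisfies GE(V, β, b, C) with C = {x : V(x) ≤ d} a sublevel set, and suppose every sublevel set {x : V(x) ≤ r} is small. Then the chain is tame with respect to V; indeed it is tamed by a constant taming function: there exist an integer k ≥ 1, a level d'' ≥ d, β'' ∈ (0, e^{-1}) and b'' < ∞ such that, with F(z) = k for z > d'' and F(z) = 1 for z ≤ d'', the F-subsampled kernel satisfies Q_F V(x) ≤ β''·V(x) + b''·1_{[V(x) ≤ d'']}(x) for all x. -/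
open MeasureTheory ProbabilityTheory ENNReal Set

/-!
Iterating the drift inequality `PV ≤ βV + b` gives `PᵏV ≤ βᵏV + b/(1-β)`. Choosing `k` with
`βᵏ ≤ η/2` and the level `d''` so large that `b/(1-β) ≤ η d''/2`, the `k`-step kernel contracts
`V` by the factor `η` off `[V ≤ d'']`, while on `[V ≤ d'']` one step of the original drift
suffices. Taking `η = e⁻¹/2`, the constant taming function `F = k` is `⌈λ z^δ⌉` with `λ = k` and
`δ = 0`, for which the tameness condition reads `log η < -1`; the sublevel set `[V ≤ d'']` is small
by assumption.
-/

section

variable {𝓧 : Type*} [MeasurableSpace 𝓧] (P : Kernel 𝓧 𝓧)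

instance kpow.instIsMarkovKernel [IsMarkovKernel P] (n : ℕ) : IsMarkovKernel (kpow P n) := by
  induction n with
  | zero => rw [kpow]; infer_instance
  | succ n ih => rw [kpow]; exact Kernel.IsMarkovKernel.comp P _

lemma kpow_succ (n : ℕ) : kpow P (n + 1) = P.comp (kpow P n) := rfl

lemma kpow_one : kpow P 1 = P := by
  rw [kpow_succ, kpow, Kernel.comp_id]

variable {P} [IsMarkovKernel P] {V : 𝓧 → ℝ} {β b : ℝ}

lemma lintegral_kpow_le_of_drift (hV : Measurable V) (hV0 : ∀ x, 0 ≤ V x)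
    (hβ0 : 0 ≤ β) (hβ1 : β < 1) (hb : 0 ≤ b)
    (hdrift : ∀ x, ∫⁻ y, ENNReal.ofReal (V y) ∂(P x) ≤ ENNReal.ofReal (β * V x + b))
    (n : ℕ) (x : 𝓧) :
    ∫⁻ y, ENNReal.ofReal (V y) ∂(kpow P n x) ≤ ENNReal.ofReal (β ^ n * V x + b / (1 - β)) := by
  have hB : 0 ≤ b / (1 - β) := div_nonneg hb (sub_nonneg.2 hβ1.le)
  induction n generalizing x with
  | zero =>
    rw [kpow, Kernel.id_apply, lintegral_dirac' _ hV.ennreal_ofReal]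
    exact ENNReal.ofReal_le_ofReal (by simpa using hB)
  | succ n ih =>
    rw [kpow_succ, Kernel.lintegral_comp _ _ _ hV.ennreal_ofReal]
    have hnonneg : 0 ≤ β * (β ^ n * V x + b / (1 - β)) := by have := hV0 x; positivity
    calc ∫⁻ z, ∫⁻ y, ENNReal.ofReal (V y) ∂(P z) ∂(kpow P n x)
        ≤ ∫⁻ z, ENNReal.ofReal β * ENNReal.ofReal (V z) + ENNReal.ofReal b ∂(kpow P n x) := by
          refine lintegral_mono fun z => (hdrift z).trans_eq ?_
          rw [ENNReal.ofReal_add (mul_nonneg hβ0 (hV0 z)) hb, ENNReal.ofReal_mul hβ0]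
      _ = ENNReal.ofReal β * ∫⁻ z, ENNReal.ofReal (V z) ∂(kpow P n x) + ENNReal.ofReal b := by
          rw [lintegral_add_right _ measurable_const, lintegral_const_mul _ hV.ennreal_ofReal,
            lintegral_const, measure_univ, mul_one]
      _ ≤ ENNReal.ofReal β * ENNReal.ofReal (β ^ n * V x + b / (1 - β)) + ENNReal.ofReal b := by
          gcongr; exact ih x
      _ = ENNReal.ofReal (β ^ (n + 1) * V x + b / (1 - β)) := by
          rw [← ENNReal.ofReal_mul hβ0, ← ENNReal.ofReal_add hnonneg hb]
          congr 1
          field_simp [(sub_pos.2 hβ1).ne']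
          ring

lemma lintegral_kpow_ite_le (hV : Measurable V) (hV0 : ∀ x, 0 ≤ V x)
    (hβ0 : 0 ≤ β) (hβ1 : β < 1) (hb : 0 ≤ b)
    (hdrift : ∀ x, ∫⁻ y, ENNReal.ofReal (V y) ∂(P x) ≤ ENNReal.ofReal (β * V x + b))
    {η r : ℝ} {k : ℕ} (hη : 0 ≤ η) (hk : β ^ k ≤ η / 2) (hr : 2 * (b / (1 - β)) ≤ η * r)
    (x : 𝓧) :
    ∫⁻ y, ENNReal.ofReal (V y) ∂(kpow P (if V x ≤ r then 1 else k) x)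
      ≤ ENNReal.ofReal (η * V x + {x' | V x' ≤ r}.indicator (fun _ => β * r + b) x) := by
  by_cases hx : V x ≤ r
  · rw [if_pos hx, kpow_one, indicator_of_mem (show x ∈ {x' | V x' ≤ r} from hx)]
    refine (hdrift x).trans (ENNReal.ofReal_le_ofReal ?_)
    nlinarith [hV0 x]
  · rw [if_neg hx, indicator_of_notMem (show x ∉ {x' | V x' ≤ r} from hx), add_zero]
    refine (lintegral_kpow_le_of_drift hV hV0 hβ0 hβ1 hb hdrift k x).trans
      (ENNReal.ofReal_le_ofReal ?_)
    have hpow : β ^ k * V x ≤ η / 2 * V x := mul_le_mul_of_nonneg_right hk (hV0 x)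
    have hlevel : η * r ≤ η * V x := mul_le_mul_of_nonneg_left (not_le.1 hx).le hη
    linarith

lemma tamingF_zero (k : ℕ) (d' z : ℝ) :
    tamingF k 0 d' z = if z ≤ d' then 1 else k := by
  simp [tamingF]

omit [IsMarkovKernel P] in
lemma isTame_of_lintegral_kpow_ite_le {k : ℕ} (hk : 1 ≤ k) {d' η b' : ℝ} (hd' : 1 ≤ d')
    (hsmall : IsSmallSet P {x | V x ≤ d'}) (hη0 : 0 < η) (hη : η < Real.exp (-1))
    (hdrift : ∀ x, ∫⁻ y, ENNReal.ofReal (V y) ∂(kpow P (if V x ≤ d' then 1 else k) x)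
      ≤ ENNReal.ofReal (η * V x + {x' | V x' ≤ d'}.indicator (fun _ => b') x)) :
    IsTame P V := by
  have hlog : Real.log η < tameBound 0 := by
    rw [tameBound, if_pos rfl, Real.log_lt_iff_lt_exp hη0]
    exact hη
  refine ⟨d', hd', hsmall, k, by exact_mod_cast hk, 0, ⟨le_rfl, one_pos⟩, η,
    ⟨hη0, hη.trans (Real.exp_lt_one_iff.2 (by norm_num))⟩, b', hlog, fun x => ?_⟩
  rw [tamingF_zero]
  exact hdrift x

end

theorem stmt_12_general {𝓧 : Type*} [MeasurableSpace 𝓧]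
    (P : ProbabilityTheory.Kernel 𝓧 𝓧) [ProbabilityTheory.IsMarkovKernel P]
    (V : 𝓧 → ℝ) (hVmeas : Measurable V) (hV1 : ∀ x, 1 ≤ V x)
    (β b d : ℝ) (hβ : β ∈ Set.Ioo (0 : ℝ) 1) (hb : 0 ≤ b)
    (C : Set 𝓧)
    (hGE : ∀ x, ∫⁻ y, ENNReal.ofReal (V y) ∂(P x)
      ≤ ENNReal.ofReal (β * V x + C.indicator (fun _ => b) x))
    (hsmall : ∀ r : ℝ, IsSmallSet P {x | V x ≤ r}) :
    IsTame P V ∧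
      ∃ k : ℕ, 1 ≤ k ∧ ∃ d'' : ℝ, d ≤ d'' ∧
        ∃ β'' ∈ Set.Ioo (0 : ℝ) (Real.exp (-1)), ∃ b'' : ℝ,
          ∀ x, ∫⁻ y, ENNReal.ofReal (V y)
              ∂((kpow P (if V x ≤ d'' then 1 else k)) x)
            ≤ ENNReal.ofReal (β'' * V x
                + Set.indicator {x' | V x' ≤ d''} (fun _ => b'') x) := by
  have hdrift (x : 𝓧) :
      ∫⁻ y, ENNReal.ofReal (V y) ∂(P x) ≤ ENNReal.ofReal (β * V x + b) :=
    (hGE x).trans <| ENNReal.ofReal_le_ofReal <| add_le_add_right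
      (indicator_le_self' (fun _ _ => hb) x) _
  set η := Real.exp (-1) / 2
  have hη0 : 0 < η := by positivity
  have hη : η < Real.exp (-1) := half_lt_self (Real.exp_pos _)
  obtain ⟨k, hk⟩ := exists_pow_lt_of_lt_one (half_pos hη0) hβ.2
  have hk1 : 1 ≤ k := Nat.one_le_iff_ne_zero.2 fun hk0 => by
    have : Real.exp (-1) < 1 := Real.exp_lt_one_iff.2 (by norm_num)
    rw [hk0, pow_zero] at hk
    linarith
  set d'' := max d (max 1 (2 * (b / (1 - β)) / η))
  have hr : 2 * (b / (1 - β)) ≤ η * d'' :=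
    (div_le_iff₀' hη0).1 ((le_max_right _ _).trans (le_max_right _ _))
  have hQ := lintegral_kpow_ite_le hVmeas (fun x => zero_le_one.trans (hV1 x)) hβ.1.le hβ.2 hb
    hdrift hη0.le hk.le hr
  exact ⟨isTame_of_lintegral_kpow_ite_le hk1 ((le_max_left _ _).trans (le_max_right _ _))
      (hsmall d'') hη0 hη hQ,
    k, hk1, d'', le_max_left _ _, η, ⟨hη0, hη⟩, _, hQ⟩

/-- a geometrically ergodic chain (satisfying GE(V, β, b, C) with
`C = [V ≤ d]` a sublevel set, all sublevel sets small) is tame with respect to `V`;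
indeed it is tamed by a constant taming function: there are `k ≥ 1`, `d'' ≥ d`,
`β'' ∈ (0, e^{-1})` and `b'' < ∞` such that, with `F(z) = k` for `z > d''` and `F(z) = 1`
for `z ≤ d''`, the subsampled kernel satisfies
`Q_F V(x) ≤ β''·V(x) + b''·1_{[V ≤ d'']}(x)` for all `x`. -/
theorem stmt_12 {𝓧 : Type*} [MeasurableSpace 𝓧]
    (P : ProbabilityTheory.Kernel 𝓧 𝓧) [ProbabilityTheory.IsMarkovKernel P]
    (V : 𝓧 → ℝ) (hVmeas : Measurable V) (hV1 : ∀ x, 1 ≤ V x)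
    (β b d : ℝ) (hβ : β ∈ Set.Ioo (0 : ℝ) 1) (hb : 0 ≤ b)
    (C : Set 𝓧) (hCdef : C = {x | V x ≤ d})
    (hGE : ∀ x, ∫⁻ y, ENNReal.ofReal (V y) ∂(P x)
      ≤ ENNReal.ofReal (β * V x + C.indicator (fun _ => b) x))
    (hsmall : ∀ r : ℝ, IsSmallSet P {x | V x ≤ r}) :
    IsTame P V ∧
      ∃ k : ℕ, 1 ≤ k ∧ ∃ d'' : ℝ, d ≤ d'' ∧
        ∃ β'' ∈ Set.Ioo (0 : ℝ) (Real.exp (-1)), ∃ b'' : ℝ,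
          ∀ x, ∫⁻ y, ENNReal.ofReal (V y)
              ∂((kpow P (if V x ≤ d'' then 1 else k)) x)
            ≤ ENNReal.ofReal (β'' * V x
                + Set.indicator {x' | V x' ≤ d''} (fun _ => b'') x) :=
  stmt_12_general P V hVmeas hV1 β b d hβ hb C hGE hsmall
end
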